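/- arXiv:2412.05878 — 4 statements merged into one kernel-verified Lean document; each statement's English description precedes it below -/
import Mathlib

section
/- Let L be a bounded linear operator from Hilbert space 𝓗 to Hilbert space H and d ∈ H. Then L*d ∈ R(L*L) if and only if d admits a decomposition d = g + h with g ∈ R(L) and h ∈ R(L)^⊥. -/
open scoped InnerProduct

namespace ContinuousLinearMap

variable {𝕜 E F : Type*} [RCLike 𝕜] [NormedAddCommGroup E] [InnerProductSpace 𝕜 E] [CompleteSpace E]
  [NormedAddCommGroup F] [InnerProductSpace 𝕜 F] [CompleteSpace F]

theorem adjoint_apply_mem_range_adjoint_comp_self_iff (T : E →L[𝕜] F) (d : F) :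
    (T†) d ∈ (T† ∘L T).range ↔ ∃ g ∈ T.range, ∃ h ∈ T.rangeᗮ, d = g + h := by
  simp_rw [orthogonal_range, LinearMap.mem_ker]
  constructor
  · rintro ⟨x, hx⟩
    refine ⟨T x, ⟨x, rfl⟩, d - T x, ?_, by abel⟩
    rw [coe_coe, map_sub, sub_eq_zero]
    exact hx.symm
  · rintro ⟨_, ⟨x, rfl⟩, h, hh, rfl⟩
    refine ⟨x, ?_⟩
    rw [coe_coe] at hh
    simp [hh]

end ContinuousLinearMap

theorem stmt8 {𝓗 H : Type*} [NormedAddCommGroup 𝓗] [InnerProductSpace ℂ 𝓗]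
    [CompleteSpace 𝓗] [NormedAddCommGroup H] [InnerProductSpace ℂ H] [CompleteSpace H]
    (L : 𝓗 →L[ℂ] H) (d : H) :
    ContinuousLinearMap.adjoint L d ∈
        LinearMap.range ((ContinuousLinearMap.adjoint L).comp L : 𝓗 →ₗ[ℂ] 𝓗) ↔
      ∃ g h : H, g ∈ LinearMap.range (L : 𝓗 →ₗ[ℂ] H) ∧ h ∈ (LinearMap.range (L : 𝓗 →ₗ[ℂ] H))ᗮ ∧ d = g + h := by
  rw [L.adjoint_apply_mem_range_adjoint_comp_self_iff d]
  constructor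
  · rintro ⟨g, hg, h, hh, rfl⟩
    exact ⟨g, h, hg, hh, rfl⟩
  · rintro ⟨g, h, hg, hh, rfl⟩
    exact ⟨g, hg, h, hh, rfl⟩
end

section
/- Let L be a bounded linear operator from Hilbert space 𝓗 to H and d ∈ H. If the set of least square solutions S = {f : ‖Lf − d‖ = inf_g ‖Lg − d‖} is nonempty, and f̃ ∈ S, then the orthogonal projection of f̃ onto N(L)^⊥ also belongs to S and has norm less than or equal to the norm of every element of S. -/
/-!
All least square solutions have the same image under `L`: two distinct images would be
equidistant from `d`, and by strict convexity of the norm their midpoint, which is again in the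
range of `L`, would be strictly closer. Hence every least square solution `f` differs from the
least square solution `p ∈ N(L)ᗮ` by an element of `N(L)`, and Pythagoras gives `‖p‖ ≤ ‖f‖`.
-/

def IsLeastSquaresSolution {E F : Type*} [SeminormedAddCommGroup F] (L : E → F) (d : F) (f : E) :
    Prop :=
  ∀ g : E, ‖L f - d‖ ≤ ‖L g - d‖

theorem eq_of_forall_norm_sub_le_of_convex {F : Type*} [NormedAddCommGroup F] [NormedSpace ℝ F]
    [StrictConvexSpace ℝ F] {s : Set F} (hs : Convex ℝ s) {d x y : F} (hx : x ∈ s) (hy : y ∈ s)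
    (hx_min : ∀ z ∈ s, ‖x - d‖ ≤ ‖z - d‖) (hy_min : ∀ z ∈ s, ‖y - d‖ ≤ ‖z - d‖) : x = y := by
  by_contra hne
  have hdist : ‖x - d‖ = ‖y - d‖ := le_antisymm (hx_min y hy) (hy_min x hx)
  have hmid : (1 / 2 : ℝ) • (x + y) - d = (1 / 2 : ℝ) • ((x - d) + (y - d)) := by module
  have hlt : ‖(1 / 2 : ℝ) • (x + y) - d‖ < ‖x - d‖ := by
    rw [hmid]
    exact (norm_midpoint_lt_iff hdist).2 fun h => hne (sub_left_injective h)
  have hmem : (1 / 2 : ℝ) • (x + y) ∈ s := by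
    simpa only [smul_add] using hs hx hy (by norm_num) (by norm_num) (by norm_num)
  exact (hx_min _ hmem).not_gt hlt

theorem IsLeastSquaresSolution.apply_eq {E F : Type*} [NormedAddCommGroup F] [NormedSpace ℝ F]
    [StrictConvexSpace ℝ F] {L : E → F} (hL : Convex ℝ (Set.range L)) {d : F} {f g : E}
    (hf : IsLeastSquaresSolution L d f) (hg : IsLeastSquaresSolution L d g) : L f = L g :=
  eq_of_forall_norm_sub_le_of_convex hL (Set.mem_range_self f) (Set.mem_range_self g)
    (Set.forall_mem_range.2 hf) (Set.forall_mem_range.2 hg)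

theorem norm_le_of_mem_orthogonal_of_sub_mem {𝕜 E : Type*} [RCLike 𝕜] [NormedAddCommGroup E]
    [InnerProductSpace 𝕜 E] {K : Submodule 𝕜 E} {p f : E} (hp : p ∈ Kᗮ) (hfp : f - p ∈ K) :
    ‖p‖ ≤ ‖f‖ := by
  have hpyth := norm_add_sq_eq_norm_sq_add_norm_sq_of_inner_eq_zero p (f - p)
    (Submodule.inner_left_of_mem_orthogonal hfp hp)
  rw [add_sub_cancel] at hpyth
  exact mul_self_le_mul_self_iff (norm_nonneg p) (norm_nonneg f) |>.2
    (hpyth ▸ le_add_of_nonneg_right (mul_self_nonneg _))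

theorem stmt9_general {𝓗 H : Type*} [NormedAddCommGroup 𝓗] [InnerProductSpace ℂ 𝓗]
    [NormedAddCommGroup H] [InnerProductSpace ℂ H]
    (L : 𝓗 →L[ℂ] H) (d : H) (ftilde : 𝓗)
    (hS : ftilde ∈ {f : 𝓗 | ∀ g : 𝓗, ‖L f - d‖ ≤ ‖L g - d‖}) :
    ∀ p : 𝓗, p ∈ (LinearMap.ker (L : 𝓗 →ₗ[ℂ] H))ᗮ → ftilde - p ∈ LinearMap.ker (L : 𝓗 →ₗ[ℂ] H) →
      p ∈ {f : 𝓗 | ∀ g : 𝓗, ‖L f - d‖ ≤ ‖L g - d‖} ∧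
        ∀ f ∈ {f : 𝓗 | ∀ g : 𝓗, ‖L f - d‖ ≤ ‖L g - d‖}, ‖p‖ ≤ ‖f‖ := by
  intro p hp hker
  have hLp : L p = L ftilde := (sub_eq_zero.1 (by simpa using hker)).symm
  have hpS : IsLeastSquaresSolution L d p := fun g => hLp ▸ hS g
  refine ⟨hpS, fun f hf => norm_le_of_mem_orthogonal_of_sub_mem hp ?_⟩
  -- makes `H`, as a real normed space, strictly convex
  have := InnerProductSpace.toInnerProductSpaceable ℂ (E := H)
  have hL : Convex ℝ (Set.range L) := by
    have := (LinearMap.range ((L : 𝓗 →ₗ[ℂ] H).restrictScalars ℝ)).convex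
    rw [LinearMap.coe_range] at this
    exact this
  rw [LinearMap.mem_ker, map_sub, sub_eq_zero]
  exact IsLeastSquaresSolution.apply_eq hL hf hpS

theorem stmt9 {𝓗 H : Type*} [NormedAddCommGroup 𝓗] [InnerProductSpace ℂ 𝓗]
    [CompleteSpace 𝓗] [NormedAddCommGroup H] [InnerProductSpace ℂ H] [CompleteSpace H]
    (L : 𝓗 →L[ℂ] H) (d : H) (ftilde : 𝓗)
    (hS : ftilde ∈ {f : 𝓗 | ∀ g : 𝓗, ‖L f - d‖ ≤ ‖L g - d‖}) :
    ∀ p : 𝓗, p ∈ (LinearMap.ker (L : 𝓗 →ₗ[ℂ] H))ᗮ → ftilde - p ∈ LinearMap.ker (L : 𝓗 →ₗ[ℂ] H) →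
      p ∈ {f : 𝓗 | ∀ g : 𝓗, ‖L f - d‖ ≤ ‖L g - d‖} ∧
        ∀ f ∈ {f : 𝓗 | ∀ g : 𝓗, ‖L f - d‖ ≤ ‖L g - d‖}, ‖p‖ ≤ ‖f‖ :=
  stmt9_general L d ftilde hS
end

section
/- Let X be an m×n complex matrix and Y ∈ ℂ^m. Suppose W₁ ∈ ℂ^n is a least square solution of XW = Y (i.e., minimizes ‖XW − Y‖) and W₂ ∈ ℂ^m is a least square solution of X*W₂ = W₁ (i.e., minimizes ‖X*V − W₁‖ over V ∈ ℂ^m). Then X*W₂ is a least square solution of XW = Y and lies in the orthogonal complement of the null space of the map W ↦ XW; hence X*W₂ is the unique minimum-norm least square solution (pseudo-inverse solution) of XW = Y. -/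
/-!
Least-squares solutions are exactly the solutions of the normal equations `Xᴴ (X W - Y) = 0`,
and since `Xᴴ X d = 0` forces `X d = 0`, any two of them differ by an element of `ker X`.
The normal equations for `W₂` say `X (Xᴴ W₂) = X W₁`, so `Xᴴ W₂` is a least-squares solution;
being in the range of `Xᴴ` it is orthogonal to `ker X`, and Pythagoras makes it the unique one
of least norm.
-/

open Matrix

noncomputable def toE {k : ℕ} (v : Fin k → ℂ) : EuclideanSpace ℂ (Fin k) :=
  (WithLp.equiv 2 (Fin k → ℂ)).symm v

section InnerProductSpace

variable {𝕜 E F : Type*} [RCLike 𝕜] [NormedAddCommGroup E] [InnerProductSpace 𝕜 E]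
  [NormedAddCommGroup F] [InnerProductSpace 𝕜 F]

theorem inner_map_sub_eq_zero_of_forall_norm_le {T : E →ₗ[𝕜] F} {b : F} {x : E}
    (h : ∀ w, ‖T x - b‖ ≤ ‖T w - b‖) (w : E) : inner 𝕜 (T x - b) (T w) = 0 := by
  have hmin : ‖b - T x‖ = ⨅ v : LinearMap.range T, ‖b - v‖ := by
    refine le_antisymm (le_ciInf ?_) ?_
    · rintro ⟨_, w, rfl⟩
      simpa only [norm_sub_rev b] using h w
    · exact ciInf_le (f := fun v : LinearMap.range T => ‖b - v‖)
        ⟨0, Set.forall_mem_range.2 fun _ => norm_nonneg _⟩ ⟨T x, x, rfl⟩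
  have := ((LinearMap.range T).norm_eq_iInf_iff_inner_eq_zero (LinearMap.mem_range_self T x)).1
    hmin (T w) (LinearMap.mem_range_self T w)
  rwa [← neg_sub, inner_neg_left, neg_eq_zero]

theorem eq_of_inner_sub_eq_zero_of_norm_le {v w : E} (horth : inner 𝕜 v (w - v) = 0)
    (hle : ‖w‖ ≤ ‖v‖) : w = v := by
  have hpyth := norm_add_sq_eq_norm_sq_add_norm_sq_of_inner_eq_zero v (w - v) horth
  rw [add_sub_cancel] at hpyth
  have : ‖w - v‖ = 0 := by nlinarith [norm_nonneg (w - v), norm_nonneg w]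
  exact sub_eq_zero.mp (norm_eq_zero.mp this)

end InnerProductSpace

section LeastSquares

open scoped ComplexOrder

variable {m n : ℕ}

theorem toE_injective : Function.Injective (toE : (Fin n → ℂ) → EuclideanSpace ℂ (Fin n)) :=
  WithLp.toLp_injective 2

theorem inner_toE_conjTranspose_mulVec (A : Matrix (Fin m) (Fin n) ℂ) (x : Fin m → ℂ)
    (y : Fin n → ℂ) :
    inner ℂ (toE (Aᴴ *ᵥ x)) (toE y) = inner ℂ (toE x) (toE (A *ᵥ y)) := by
  simp only [EuclideanSpace.inner_eq_star_dotProduct, toE, WithLp.equiv_symm_apply]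
  rw [star_mulVec, conjTranspose_conjTranspose, dotProduct_comm, ← dotProduct_mulVec,
    dotProduct_comm]

theorem inner_toE_conjTranspose_mulVec_eq_zero {A : Matrix (Fin m) (Fin n) ℂ} {y : Fin n → ℂ}
    (hy : A *ᵥ y = 0) (x : Fin m → ℂ) : inner ℂ (toE (Aᴴ *ᵥ x)) (toE y) = 0 := by
  rw [inner_toE_conjTranspose_mulVec, hy]
  exact inner_zero_right _

def IsLeastSquaresSol (A : Matrix (Fin m) (Fin n) ℂ) (b : Fin m → ℂ) (x : Fin n → ℂ) : Prop :=
  ∀ w, ‖toE (A *ᵥ x - b)‖ ≤ ‖toE (A *ᵥ w - b)‖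

namespace IsLeastSquaresSol

variable {A : Matrix (Fin m) (Fin n) ℂ} {b : Fin m → ℂ} {x x' : Fin n → ℂ}

theorem of_mulVec_eq (h : IsLeastSquaresSol A b x) (hx : A *ᵥ x' = A *ᵥ x) :
    IsLeastSquaresSol A b x' := by
  rw [IsLeastSquaresSol, hx]
  exact h

theorem conjTranspose_mulVec_residual_eq_zero (h : IsLeastSquaresSol A b x) :
    Aᴴ *ᵥ (A *ᵥ x - b) = 0 := by
  have horth : ∀ w, inner ℂ (toE (Aᴴ *ᵥ (A *ᵥ x - b))) (toE w) = 0 := fun w => by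
    rw [inner_toE_conjTranspose_mulVec]
    exact inner_map_sub_eq_zero_of_forall_norm_le (T := toEuclideanLin A) (fun w => h w.ofLp)
      (toE w)
  exact toE_injective (inner_self_eq_zero.mp (horth _))

theorem mulVec_eq (h : IsLeastSquaresSol A b x) (h' : IsLeastSquaresSol A b x') :
    A *ᵥ x' = A *ᵥ x := by
  have : (Aᴴ * A) *ᵥ (x' - x) = 0 := by
    rw [← mulVec_mulVec, mulVec_sub, ← sub_sub_sub_cancel_right _ _ b, mulVec_sub,
      h'.conjTranspose_mulVec_residual_eq_zero, h.conjTranspose_mulVec_residual_eq_zero, sub_zero]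
  rw [conjTranspose_mul_self_mulVec_eq_zero, mulVec_sub] at this
  exact sub_eq_zero.mp this

end IsLeastSquaresSol

end LeastSquares

theorem stmt11 {m n : ℕ} (X : Matrix (Fin m) (Fin n) ℂ) (Y : Fin m → ℂ)
    (W₁ : Fin n → ℂ) (W₂ : Fin m → ℂ)
    (h₁ : ∀ W : Fin n → ℂ, ‖toE (X.mulVec W₁ - Y)‖ ≤ ‖toE (X.mulVec W - Y)‖)
    (h₂ : ∀ V : Fin m → ℂ, ‖toE (Xᴴ.mulVec W₂ - W₁)‖ ≤ ‖toE (Xᴴ.mulVec V - W₁)‖) :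
    (∀ W : Fin n → ℂ,
        ‖toE (X.mulVec (Xᴴ.mulVec W₂) - Y)‖ ≤ ‖toE (X.mulVec W - Y)‖) ∧
      (∀ V : Fin n → ℂ, X.mulVec V = 0 →
        (inner ℂ (toE (Xᴴ.mulVec W₂)) (toE V) : ℂ) = 0) ∧
      (∀ W : Fin n → ℂ,
        (∀ W' : Fin n → ℂ, ‖toE (X.mulVec W - Y)‖ ≤ ‖toE (X.mulVec W' - Y)‖) →
        ‖toE W‖ ≤ ‖toE (Xᴴ.mulVec W₂)‖ → W = Xᴴ.mulVec W₂) := by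
  have hW₁ : IsLeastSquaresSol X Y W₁ := h₁
  have hnormal : X *ᵥ (Xᴴ *ᵥ W₂ - W₁) = 0 := by
    simpa only [conjTranspose_conjTranspose] using
      IsLeastSquaresSol.conjTranspose_mulVec_residual_eq_zero (A := Xᴴ) h₂
  have hW₀ : IsLeastSquaresSol X Y (Xᴴ *ᵥ W₂) :=
    hW₁.of_mulVec_eq (sub_eq_zero.mp (by rwa [mulVec_sub] at hnormal))
  refine ⟨hW₀, fun V hV => inner_toE_conjTranspose_mulVec_eq_zero hV W₂, fun W hW hle => ?_⟩
  have hker : X *ᵥ (W - Xᴴ *ᵥ W₂) = 0 := by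
    rw [mulVec_sub, sub_eq_zero]
    exact hW₀.mulVec_eq hW
  exact toE_injective <|
    eq_of_inner_sub_eq_zero_of_norm_le (inner_toE_conjTranspose_mulVec_eq_zero hker W₂) hle
end

section
/- Let L be a bounded linear operator from Hilbert space 𝓗 to H and d ∈ H. Suppose LL*d ∈ R(LL*LL*). Then d decomposes as d = d₁ + d₀ with d₁ ∈ R(LL*) and d₀ ∈ R(L)^⊥; in particular L*d ∈ R(L*L), so the least square problem for Lf = d is solvable. -/
/-! With `T = L L*`, a solution of `T (T w) = T d` puts `d₀ = d - T w` in `ker T = ker L* = R(L)ᗮ`.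
Hence `L* d = L* L (L* w)`, and `f = L* w` solves the normal equation, so it minimises
`‖L f - d‖`. -/

open ContinuousLinearMap
open scoped InnerProduct

namespace ContinuousLinearMap

variable {𝕜 E F : Type*} [RCLike 𝕜] [NormedAddCommGroup E] [InnerProductSpace 𝕜 E]
  [CompleteSpace E] [NormedAddCommGroup F] [InnerProductSpace 𝕜 F] [CompleteSpace F]

theorem exists_adjoint_apply_sub_eq_zero_of_mem_range_sq (L : E →L[𝕜] F) {d : F}
    (h : (L ∘L L†) d ∈ LinearMap.range (((L ∘L L†) ∘L (L ∘L L†) : F →L[𝕜] F) : F →ₗ[𝕜] F)) :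
    ∃ w : F, (L†) (d - L ((L†) w)) = 0 := by
  obtain ⟨w, hw⟩ := h
  have hker : d - L ((L†) w) ∈ (L ∘L L†).ker := by
    rw [LinearMap.mem_ker, map_sub, sub_eq_zero]
    exact hw.symm
  exact ⟨w, by rwa [ker_self_comp_adjoint] at hker⟩

end ContinuousLinearMap

theorem stmt14 {𝓗 H : Type*} [NormedAddCommGroup 𝓗] [InnerProductSpace ℂ 𝓗]
    [CompleteSpace 𝓗] [NormedAddCommGroup H] [InnerProductSpace ℂ H] [CompleteSpace H]
    (L : 𝓗 →L[ℂ] H) (d : H)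
    (h : (L.comp (ContinuousLinearMap.adjoint L)) d ∈
      LinearMap.range (((L.comp (ContinuousLinearMap.adjoint L)).comp
        (L.comp (ContinuousLinearMap.adjoint L)) : H →L[ℂ] H) : H →ₗ[ℂ] H)) :
    (∃ d₁ d₀ : H, d₁ ∈ LinearMap.range ((L.comp (ContinuousLinearMap.adjoint L) : H →L[ℂ] H) : H →ₗ[ℂ] H) ∧
        d₀ ∈ (LinearMap.range (L : 𝓗 →ₗ[ℂ] H))ᗮ ∧ d = d₁ + d₀) ∧
      ContinuousLinearMap.adjoint L d ∈
        LinearMap.range (((ContinuousLinearMap.adjoint L).comp L : 𝓗 →L[ℂ] 𝓗) : 𝓗 →ₗ[ℂ] 𝓗) ∧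
      ∃ f : 𝓗, ∀ g : 𝓗, ‖L f - d‖ ≤ ‖L g - d‖ := by
  obtain ⟨w, hw⟩ := exists_adjoint_apply_sub_eq_zero_of_mem_range_sq L h
  have hd₀ : d - L ((L†) w) ∈ (LinearMap.range (L : 𝓗 →ₗ[ℂ] H))ᗮ := by
    rw [orthogonal_range]
    exact hw
  have hnormal : (L†) (L ((L†) w)) = (L†) d := by
    rwa [map_sub, sub_eq_zero, eq_comm] at hw
  refine ⟨⟨L ((L†) w), d - L ((L†) w), ⟨w, rfl⟩, hd₀, (add_sub_cancel _ _).symm⟩,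
    ⟨(L†) w, hnormal⟩, (L†) w, fun g => ?_⟩
  rw [norm_sub_rev, norm_sub_rev (L g)]
  exact (forall_norm_sub_apply_le_iff_adjoint_apply_sub_eq_zero L d _).mpr hw g
end
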